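/- Let F = {f_n} be a J-orthogonal Schauder basis of the Hilbert space (H, (·,·)) associated with a Krein space (H, [·,·]). Then F is a J-frame if and only if F is J-bounded, i.e., 0 < A ≤ |[f_n,f_n]| ≤ B < ∞ for all n. -/

import Mathlib

noncomputable section
open Filter Topology

namespace KreinStmt

local notation "⟪" x ", " y "⟫" => @inner ℂ _ _ x y

variable {H : Type} [NormedAddCommGroup H] [InnerProductSpace ℂ H] [CompleteSpace H]

/-- The indefinite inner product `[f,g]` of the Krein space with fundamental symmetry `J`. -/
def indef (J : H →L[ℂ] H) (f g : H) : ℂ := ⟪J f, g⟫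

/-- `J` is a fundamental symmetry: a self-adjoint involution on the Hilbert space `H`. -/
def IsFundSym (J : H →L[ℂ] H) : Prop :=
  (∀ f g : H, ⟪J f, g⟫ = ⟪f, J g⟫) ∧ ∀ f : H, J (J f) = f

/-- `M` is a (closed) positive subspace of the Krein space. -/
def IsPos (J : H →L[ℂ] H) (M : Submodule ℂ H) : Prop :=
  IsClosed (M : Set H) ∧ ∀ f ∈ M, f ≠ 0 → 0 < (indef J f f).re

/-- `M` is a (closed) negative subspace of the Krein space. -/
def IsNeg (J : H →L[ℂ] H) (M : Submodule ℂ H) : Prop :=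
  IsClosed (M : Set H) ∧ ∀ f ∈ M, f ≠ 0 → (indef J f f).re < 0

/-- Maximal positive subspace. -/
def IsMaxPos (J : H →L[ℂ] H) (M : Submodule ℂ H) : Prop :=
  IsPos J M ∧ ∀ M' : Submodule ℂ H, IsPos J M' → M ≤ M' → M' = M

/-- Maximal negative subspace. -/
def IsMaxNeg (J : H →L[ℂ] H) (M : Submodule ℂ H) : Prop :=
  IsNeg J M ∧ ∀ M' : Submodule ℂ H, IsNeg J M' → M ≤ M' → M' = M

/-- Uniformly positive subspace. -/
def IsUnifPos (J : H →L[ℂ] H) (M : Submodule ℂ H) : Prop :=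
  IsClosed (M : Set H) ∧ ∃ α > (0:ℝ), ∀ f ∈ M, α * ‖f‖ ^ 2 ≤ (indef J f f).re

/-- Uniformly negative subspace. -/
def IsUnifNeg (J : H →L[ℂ] H) (M : Submodule ℂ H) : Prop :=
  IsClosed (M : Set H) ∧ ∃ α > (0:ℝ), ∀ f ∈ M, α * ‖f‖ ^ 2 ≤ -(indef J f f).re

/-- Maximal uniformly positive subspace. -/
def IsMaxUnifPos (J : H →L[ℂ] H) (M : Submodule ℂ H) : Prop :=
  IsUnifPos J M ∧ ∀ M' : Submodule ℂ H, IsUnifPos J M' → M ≤ M' → M' = M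

/-- Maximal uniformly negative subspace. -/
def IsMaxUnifNeg (J : H →L[ℂ] H) (M : Submodule ℂ H) : Prop :=
  IsUnifNeg J M ∧ ∀ M' : Submodule ℂ H, IsUnifNeg J M' → M ≤ M' → M' = M

/-- Two subspaces are `J`-orthogonal. -/
def JOrth (J : H →L[ℂ] H) (M N : Submodule ℂ H) : Prop :=
  ∀ f ∈ M, ∀ g ∈ N, indef J f g = 0

/-- Indices of nonnegative vectors of the family. -/
def Npos (J : H →L[ℂ] H) (F : ℕ → H) : Set ℕ := {n | 0 ≤ (indef J (F n) (F n)).re}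

/-- Indices of negative vectors of the family. -/
def Nneg (J : H →L[ℂ] H) (F : ℕ → H) : Set ℕ := {n | (indef J (F n) (F n)).re < 0}

/-- `M₊`: closed span of the nonnegative vectors of the family. -/
def Mpos (J : H →L[ℂ] H) (F : ℕ → H) : Submodule ℂ H :=
  (Submodule.span ℂ (F '' Npos J F)).topologicalClosure

/-- `M₋`: closed span of the negative vectors of the family. -/
def Mneg (J : H →L[ℂ] H) (F : ℕ → H) : Submodule ℂ H :=
  (Submodule.span ℂ (F '' Nneg J F)).topologicalClosure

/-- `J`-frame in the sense of Definition 3 of the paper, with frame bounds `A ≤ B`. -/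
def IsJFrame (J : H →L[ℂ] H) (F : ℕ → H) (A B : ℝ) : Prop :=
  0 < A ∧ A ≤ B ∧ IsMaxPos J (Mpos J F) ∧ IsMaxNeg J (Mneg J F) ∧
  (∀ f ∈ Submodule.span ℂ (F '' Npos J F),
    A * |(indef J f f).re| ≤ ∑' n : Npos J F, ‖indef J f (F ↑n)‖ ^ 2 ∧
    ∑' n : Npos J F, ‖indef J f (F ↑n)‖ ^ 2 ≤ B * |(indef J f f).re|) ∧
  (∀ f ∈ Submodule.span ℂ (F '' Nneg J F),
    A * |(indef J f f).re| ≤ ∑' n : Nneg J F, ‖indef J f (F ↑n)‖ ^ 2 ∧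
    ∑' n : Nneg J F, ‖indef J f (F ↑n)‖ ^ 2 ≤ B * |(indef J f f).re|)


/-!
Expanding `f = ∑ cₙ fₙ` in the basis, `J`-orthogonality recovers the coefficients as
`[f, fₘ] = c̄ₘ [fₘ, fₘ]` and diagonalises the form: `[f, f] = ∑ |cₙ|² [fₙ, fₙ]`. For a finite
combination `f` of the `fₙ` with `n ∈ N₊` the frame sum is `∑ |cₙ|² |[fₙ, fₙ]|²`, so the frame
inequalities reduce to `A |[fₙ, fₙ]| ≤ |[fₙ, fₙ]|² ≤ B |[fₙ, fₙ]|`; taking `f = fₙ` gives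
necessity, since positivity of `M₊` rules out `[fₙ, fₙ] = 0`.

Conversely, once no `[fₙ, fₙ]` vanishes, the elements of `M₊` have no coefficients on `N₋`,
which makes `M₊` positive, and a nonnegative subspace containing `M₊` cannot contain a vector
with a coefficient on `N₋`, which makes it maximal. The negative side is the positive side for
the fundamental symmetry `-J`, whose nonnegative indices are `N₋`.
-/

open ComplexConjugate

lemma exists_finset_sum_smul_eq_of_mem_span {R M ι : Type*} [Semiring R] [AddCommMonoid M]
    [Module R M] {v : ι → M} {S : Set ι} {x : M} (hx : x ∈ Submodule.span R (v '' S)) :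
    ∃ (s : Finset ι) (c : ι → R), ↑s ⊆ S ∧ x = ∑ n ∈ s, c n • v n := by
  obtain ⟨l, hl, rfl⟩ := (Finsupp.mem_span_image_iff_linearCombination R).mp hx
  exact ⟨l.support, l, hl, Finsupp.linearCombination_apply R l⟩

lemma re_mul_conj_mul (z w : ℂ) : (z * (conj z * w)).re = ‖z‖ ^ 2 * w.re := by
  rw [← mul_assoc, Complex.mul_conj', ← Complex.ofReal_pow, Complex.re_ofReal_mul]

section Form

omit [CompleteSpace H]

variable {J : H →L[ℂ] H}

lemma indef_neg (J : H →L[ℂ] H) (f g : H) : indef (-J) f g = -indef J f g := by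
  simp [indef, inner_neg_left]

lemma IsFundSym.neg (hJ : IsFundSym J) : IsFundSym (-J) :=
  ⟨fun f g => by simp [hJ.1 f g], fun f => by simp [hJ.2 f]⟩

lemma IsFundSym.conj_indef (hJ : IsFundSym J) (f g : H) : conj (indef J f g) = indef J g f := by
  rw [indef, indef, inner_conj_symm, hJ.1]

lemma IsFundSym.norm_indef_self (hJ : IsFundSym J) (f : H) :
    ‖indef J f f‖ = |(indef J f f).re| := by
  obtain ⟨r, hr⟩ := Complex.conj_eq_iff_real.mp (hJ.conj_indef f f)
  rw [hr, Complex.norm_real, Complex.ofReal_re, Real.norm_eq_abs]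

lemma IsFundSym.re_indef_sub_self (hJ : IsFundSym J) (f g : H) :
    (indef J (f - g) (f - g)).re
      = (indef J f f).re - 2 * (indef J f g).re + (indef J g g).re := by
  have hsymm : (indef J g f).re = (indef J f g).re := by
    rw [← hJ.conj_indef f g, Complex.conj_re]
  simp only [indef, map_sub, inner_sub_left, inner_sub_right, Complex.sub_re] at hsymm ⊢
  linarith

lemma continuous_indef_left (J : H →L[ℂ] H) (g : H) : Continuous fun f => indef J f g :=
  J.continuous.inner continuous_const

lemma continuous_indef_self (J : H →L[ℂ] H) : Continuous fun f => indef J f f :=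
  J.continuous.inner continuous_id

end Form

section OrthogonalFamily

omit [CompleteSpace H]

variable {ι : Type*} {J : H →L[ℂ] H} {F : ι → H}

lemma indef_sum_smul_left (J : H →L[ℂ] H) (F : ι → H) (s : Finset ι) (c : ι → ℂ) (g : H) :
    indef J (∑ n ∈ s, c n • F n) g = ∑ n ∈ s, conj (c n) * indef J (F n) g := by
  simp [indef, mul_comm]

lemma indef_sum_smul_right (J : H →L[ℂ] H) (F : ι → H) (s : Finset ι) (c : ι → ℂ) (f : H) :
    indef J f (∑ n ∈ s, c n • F n) = ∑ n ∈ s, c n * indef J f (F n) := by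
  simp [indef]

variable (horth : Pairwise fun n m => indef J (F n) (F m) = 0)
include horth

lemma indef_sum_smul_of_mem {s : Finset ι} (c : ι → ℂ) {m : ι} (hm : m ∈ s) :
    indef J (∑ n ∈ s, c n • F n) (F m) = conj (c m) * indef J (F m) (F m) := by
  rw [indef_sum_smul_left, Finset.sum_eq_single_of_mem m hm]
  intro n _ hnm
  rw [horth hnm, mul_zero]

lemma indef_sum_smul_of_notMem {s : Finset ι} (c : ι → ℂ) {m : ι} (hm : m ∉ s) :
    indef J (∑ n ∈ s, c n • F n) (F m) = 0 := by
  rw [indef_sum_smul_left]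
  refine Finset.sum_eq_zero fun n hn => ?_
  rw [horth (ne_of_mem_of_not_mem hn hm), mul_zero]

lemma re_indef_sum_smul_self (s : Finset ι) (c : ι → ℂ) :
    (indef J (∑ n ∈ s, c n • F n) (∑ n ∈ s, c n • F n)).re
      = ∑ n ∈ s, ‖c n‖ ^ 2 * (indef J (F n) (F n)).re := by
  rw [indef_sum_smul_right, Complex.re_sum]
  refine Finset.sum_congr rfl fun n hn => ?_
  rw [indef_sum_smul_of_mem horth c hn, re_mul_conj_mul]

lemma tsum_norm_indef_sq_of_subset {S : Set ι} {s : Finset ι} (hs : ↑s ⊆ S) (c : ι → ℂ) :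
    ∑' k : S, ‖indef J (∑ n ∈ s, c n • F n) (F k)‖ ^ 2
      = ∑ n ∈ s, ‖c n‖ ^ 2 * ‖indef J (F n) (F n)‖ ^ 2 := by
  have hzero : ∀ k ∉ s, ‖indef J (∑ n ∈ s, c n • F n) (F k)‖ ^ 2 = 0 := fun k hk => by
    rw [indef_sum_smul_of_notMem horth c hk, norm_zero, sq, mul_zero]
  rw [tsum_subtype_eq_of_support_subset ((Function.support_subset_iff'.mpr hzero).trans hs),
    tsum_eq_sum hzero]
  refine Finset.sum_congr rfl fun n hn => ?_
  rw [indef_sum_smul_of_mem horth c hn, norm_mul, Complex.norm_conj, mul_pow]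

lemma indef_eq_zero_of_mem_closure_span {S : Set ι} {f : H}
    (hf : f ∈ (Submodule.span ℂ (F '' S)).topologicalClosure) {m : ι} (hm : m ∉ S) :
    indef J f (F m) = 0 := by
  -- `f ↦ [f, F m]` is only conjugate-linear, so use the kernel of `f ↦ ⟪F m, J f⟫` instead.
  let φ : H →L[ℂ] ℂ := (innerSL ℂ (F m)).comp J
  have hφ : ∀ f, φ f = conj (indef J f (F m)) := fun f => (inner_conj_symm _ _).symm
  have hspan : Submodule.span ℂ (F '' S) ≤ LinearMap.ker (φ : H →ₗ[ℂ] ℂ) := by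
    rw [Submodule.span_le]
    rintro _ ⟨k, hk, rfl⟩
    simp [hφ, horth (ne_of_mem_of_not_mem hk hm)]
  have hker := Submodule.topologicalClosure_minimal _ hspan φ.isClosed_ker hf
  simpa [hφ] using hker

end OrthogonalFamily

section Expansion

omit [CompleteSpace H]

variable {J : H →L[ℂ] H} {F : ℕ → H} {c : ℕ → ℂ} {f : H}

lemma ne_zero_of_existsUnique_expansion
    (hbasis : ∀ f : H, ∃! c : ℕ → ℂ,
      Tendsto (fun N : ℕ => ∑ n ∈ Finset.range N, c n • F n) atTop (𝓝 f))
    (m : ℕ) : F m ≠ 0 := by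
  intro hm
  have hzero : ∀ c : ℕ → ℂ, (∀ n, c n • F n = 0) →
      Tendsto (fun N : ℕ => ∑ n ∈ Finset.range N, c n • F n) atTop (𝓝 0) := fun c hc => by
    simp [hc]
  have h := (hbasis 0).unique (hzero 0 fun n => zero_smul ℂ (F n))
    (hzero (Pi.single m 1) fun n => by rcases eq_or_ne n m with rfl | hn <;> simp [*])
  simpa using congrFun h m

variable (hc : Tendsto (fun N : ℕ => ∑ n ∈ Finset.range N, c n • F n) atTop (𝓝 f))
include hc

lemma mem_topologicalClosure_span_of_tendsto {S : Set ℕ} (hS : ∀ n ∉ S, c n = 0) :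
    f ∈ (Submodule.span ℂ (F '' S)).topologicalClosure := by
  refine mem_closure_of_tendsto hc <| Eventually.of_forall fun N =>
    Submodule.sum_mem _ fun n _ => ?_
  by_cases hn : n ∈ S
  · exact Submodule.smul_mem _ _ (Submodule.subset_span ⟨n, hn, rfl⟩)
  · simp [hS n hn]

variable (horth : Pairwise fun n m => indef J (F n) (F m) = 0)
include horth

lemma indef_eq_of_tendsto (m : ℕ) : indef J f (F m) = conj (c m) * indef J (F m) (F m) := by
  refine tendsto_nhds_unique (((continuous_indef_left J (F m)).tendsto f).comp hc) ?_
  refine tendsto_const_nhds.congr' ?_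
  filter_upwards [eventually_gt_atTop m] with N hN
  exact (indef_sum_smul_of_mem horth c (Finset.mem_range.mpr hN)).symm

lemma tendsto_re_indef_self :
    Tendsto (fun N : ℕ => ∑ n ∈ Finset.range N, ‖c n‖ ^ 2 * (indef J (F n) (F n)).re) atTop
      (𝓝 (indef J f f).re) := by
  have h := ((Complex.continuous_re.comp (continuous_indef_self J)).tendsto f).comp hc
  simpa only [Function.comp_def, re_indef_sum_smul_self horth] using h

lemma coeff_eq_zero_of_mem_closure_span {S : Set ℕ}
    (hf : f ∈ (Submodule.span ℂ (F '' S)).topologicalClosure) {m : ℕ} (hm : m ∉ S)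
    (hx : indef J (F m) (F m) ≠ 0) : c m = 0 := by
  have h := (indef_eq_of_tendsto hc horth m).symm.trans
    (indef_eq_zero_of_mem_closure_span horth hf hm)
  simpa [hx] using h

lemma re_indef_sub_sum_smul_self (hJ : IsFundSym J) (t : Finset ℕ) :
    (indef J (f - ∑ n ∈ t, c n • F n) (f - ∑ n ∈ t, c n • F n)).re
      = (indef J f f).re - ∑ n ∈ t, ‖c n‖ ^ 2 * (indef J (F n) (F n)).re := by
  have hcross : (indef J f (∑ n ∈ t, c n • F n)).re
      = ∑ n ∈ t, ‖c n‖ ^ 2 * (indef J (F n) (F n)).re := by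
    rw [indef_sum_smul_right, Complex.re_sum]
    exact Finset.sum_congr rfl fun n _ => by rw [indef_eq_of_tendsto hc horth, re_mul_conj_mul]
  rw [hJ.re_indef_sub_self, hcross, re_indef_sum_smul_self horth]
  ring

end Expansion

section MaximalSubspaces

omit [CompleteSpace H]

variable {J : H →L[ℂ] H} {F : ℕ → H}
  (horth : Pairwise fun n m => indef J (F n) (F m) = 0)
  (hexp : ∀ f : H, ∃ c : ℕ → ℂ,
    Tendsto (fun N : ℕ => ∑ n ∈ Finset.range N, c n • F n) atTop (𝓝 f))
include horth hexp

lemma isPos_Mpos (hF : ∀ n, (indef J (F n) (F n)).re ≠ 0) : IsPos J (Mpos J F) := by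
  refine ⟨Submodule.isClosed_topologicalClosure _, fun f hf hf0 => ?_⟩
  obtain ⟨c, hc⟩ := hexp f
  have hNneg : ∀ n, (indef J (F n) (F n)).re < 0 → c n = 0 := fun n hn =>
    coeff_eq_zero_of_mem_closure_span hc horth hf (not_le.mpr hn)
      fun hx => hF n (by rw [hx, Complex.zero_re])
  have hterm : ∀ n, 0 ≤ ‖c n‖ ^ 2 * (indef J (F n) (F n)).re := fun n => by
    rcases le_or_gt 0 (indef J (F n) (F n)).re with hn | hn
    · positivity
    · simp [hNneg n hn]
  obtain ⟨m, hm⟩ : ∃ m, c m ≠ 0 := by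
    by_contra! h
    exact hf0 (tendsto_nhds_unique hc (by simp [h]))
  have hxm : 0 < (indef J (F m) (F m)).re :=
    lt_of_le_of_ne (not_lt.mp fun h => hm (hNneg m h)) (hF m).symm
  have hsum := (hasSum_iff_tendsto_nat_of_nonneg hterm _).mpr (tendsto_re_indef_self hc horth)
  exact (mul_pos (by positivity) hxm).trans_le (le_hasSum hsum m fun n _ => hterm n)

/-- Suppose `cₘ ≠ 0` for some `m ∈ N₋`. Subtracting from `v` the `N₊`-terms of a partial sum stays
in `M`, so the `N₊`-part of every partial sum of `[v, v] = ∑ |cₙ|² [fₙ, fₙ]` is at most `[v, v]`,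
while its `N₋`-part is eventually at most `|cₘ|² [fₘ, fₘ] < 0`. -/
lemma mem_Mpos_of_nonneg (hJ : IsFundSym J) {M : Submodule ℂ H}
    (hM : ∀ w ∈ M, 0 ≤ (indef J w w).re) (hle : Mpos J F ≤ M) {v : H} (hv : v ∈ M) :
    v ∈ Mpos J F := by
  classical
  obtain ⟨c, hc⟩ := hexp v
  refine mem_topologicalClosure_span_of_tendsto hc fun m hm => ?_
  by_contra hcm
  let a : ℕ → ℝ := fun n => ‖c n‖ ^ 2 * (indef J (F n) (F n)).re
  have ham : a m < 0 := mul_neg_of_pos_of_neg (by positivity) (not_le.mp hm)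
  have hpos : ∀ N, ∑ n ∈ (Finset.range N).filter (· ∈ Npos J F), a n ≤ (indef J v v).re := by
    intro N
    have hspan : ∑ n ∈ (Finset.range N).filter (· ∈ Npos J F), c n • F n ∈ M :=
      hle <| Submodule.le_topologicalClosure _ <| Submodule.sum_mem _ fun n hn =>
        Submodule.smul_mem _ _ (Submodule.subset_span ⟨n, (Finset.mem_filter.mp hn).2, rfl⟩)
    have h := hM _ (M.sub_mem hv hspan)
    rw [re_indef_sub_sum_smul_self hc horth hJ] at h
    linarith
  have hneg : ∀ N > m, ∑ n ∈ (Finset.range N).filter (· ∉ Npos J F), a n ≤ a m := by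
    intro N hN
    have hmN : m ∈ (Finset.range N).filter (· ∉ Npos J F) :=
      Finset.mem_filter.mpr ⟨Finset.mem_range.mpr hN, hm⟩
    rw [← Finset.add_sum_erase _ _ hmN]
    refine add_le_of_nonpos_right (Finset.sum_nonpos fun n hn => ?_)
    have hn : (indef J (F n) (F n)).re < 0 :=
      not_le.mp (Finset.mem_filter.mp (Finset.mem_of_mem_erase hn)).2
    exact mul_nonpos_of_nonneg_of_nonpos (by positivity) hn.le
  have hlim : (indef J v v).re ≤ (indef J v v).re + a m := by
    refine le_of_tendsto (tendsto_re_indef_self hc horth) ?_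
    filter_upwards [eventually_gt_atTop m] with N hN
    rw [← Finset.sum_filter_add_sum_filter_not _ (· ∈ Npos J F)]
    linarith [hpos N, hneg N hN]
  linarith

lemma isMaxPos_Mpos (hJ : IsFundSym J) (hF : ∀ n, (indef J (F n) (F n)).re ≠ 0) :
    IsMaxPos J (Mpos J F) := by
  refine ⟨isPos_Mpos horth hexp hF, fun M hM hle =>
    le_antisymm (fun v hv => mem_Mpos_of_nonneg horth hexp hJ (fun w hw => ?_) hle hv) hle⟩
  rcases eq_or_ne w 0 with rfl | hw0
  · simp [indef]
  · exact (hM.2 w hw hw0).le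

end MaximalSubspaces

section FrameBounds

omit [CompleteSpace H]

variable {ι : Type*} {J : H →L[ℂ] H} {F : ι → H} {S : Set ι} {A B : ℝ}

def FrameBoundsOn (J : H →L[ℂ] H) (F : ι → H) (S : Set ι) (A B : ℝ) : Prop :=
  ∀ f ∈ Submodule.span ℂ (F '' S),
    A * |(indef J f f).re| ≤ ∑' n : S, ‖indef J f (F ↑n)‖ ^ 2 ∧
    ∑' n : S, ‖indef J f (F ↑n)‖ ^ 2 ≤ B * |(indef J f f).re|

variable (hJ : IsFundSym J) (horth : Pairwise fun n m => indef J (F n) (F m) = 0)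
include hJ horth

lemma frameBoundsOn_of_nonneg (hS : ∀ n ∈ S, 0 ≤ (indef J (F n) (F n)).re)
    (hb : ∀ n ∈ S, A ≤ ‖indef J (F n) (F n)‖ ∧ ‖indef J (F n) (F n)‖ ≤ B) :
    FrameBoundsOn J F S A B := by
  intro f hf
  obtain ⟨s, c, hs, rfl⟩ := exists_finset_sum_smul_eq_of_mem_span hf
  have hre : |(indef J (∑ n ∈ s, c n • F n) (∑ n ∈ s, c n • F n)).re|
      = ∑ n ∈ s, ‖c n‖ ^ 2 * ‖indef J (F n) (F n)‖ := by
    have hterm : ∀ n ∈ s, ‖c n‖ ^ 2 * (indef J (F n) (F n)).re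
        = ‖c n‖ ^ 2 * ‖indef J (F n) (F n)‖ := fun n hn => by
      rw [hJ.norm_indef_self, abs_of_nonneg (hS n (hs hn))]
    rw [re_indef_sum_smul_self horth, Finset.sum_congr rfl hterm, abs_of_nonneg (by positivity)]
  rw [hre, tsum_norm_indef_sq_of_subset horth hs, Finset.mul_sum, Finset.mul_sum]
  have hnn : ∀ n, 0 ≤ ‖c n‖ ^ 2 * ‖indef J (F n) (F n)‖ := fun n => by positivity
  constructor <;> refine Finset.sum_le_sum fun n hn => ?_
  · linarith [mul_le_mul_of_nonneg_left (hb n (hs hn)).1 (hnn n)]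
  · linarith [mul_le_mul_of_nonneg_left (hb n (hs hn)).2 (hnn n)]

lemma FrameBoundsOn.bounds_norm_indef_self (h : FrameBoundsOn J F S A B) {n : ι} (hn : n ∈ S)
    (hx : indef J (F n) (F n) ≠ 0) :
    A ≤ ‖indef J (F n) (F n)‖ ∧ ‖indef J (F n) (F n)‖ ≤ B := by
  have hsingle : ∑' k : S, ‖indef J (F n) (F k)‖ ^ 2 = ‖indef J (F n) (F n)‖ ^ 2 := by
    simpa using tsum_norm_indef_sq_of_subset horth (s := {n}) (by simpa using hn) fun _ => 1
  obtain ⟨hlo, hhi⟩ := h (F n) (Submodule.subset_span ⟨n, hn, rfl⟩)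
  rw [hsingle, ← hJ.norm_indef_self, sq] at hlo hhi
  have hpos : 0 < ‖indef J (F n) (F n)‖ := norm_pos_iff.mpr hx
  exact ⟨le_of_mul_le_mul_right hlo hpos, le_of_mul_le_mul_right hhi hpos⟩

end FrameBounds

section Reflection

omit [CompleteSpace H]

variable {ι : Type*} {J : H →L[ℂ] H} {F : ι → H} {S : Set ι} {A B : ℝ}

lemma pairwise_indef_neg (horth : Pairwise fun n m => indef J (F n) (F m) = 0) :
    Pairwise fun n m => indef (-J) (F n) (F m) = 0 := fun n m h =>
  (indef_neg J (F n) (F m)).trans (neg_eq_zero.mpr (horth h))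

lemma frameBoundsOn_neg_iff : FrameBoundsOn (-J) F S A B ↔ FrameBoundsOn J F S A B := by
  simp only [FrameBoundsOn, indef_neg, Complex.neg_re, abs_neg, norm_neg]

lemma isMaxPos_neg_iff {M : Submodule ℂ H} : IsMaxPos (-J) M ↔ IsMaxNeg J M := by
  simp only [IsMaxPos, IsMaxNeg, IsPos, IsNeg, indef_neg, Complex.neg_re, neg_pos]

lemma Mpos_neg {F : ℕ → H} (hF : ∀ n, (indef J (F n) (F n)).re ≠ 0) :
    Mpos (-J) F = Mneg J F := by
  have hN : Npos (-J) F = Nneg J F := by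
    ext n
    simpa only [Npos, Nneg, Set.mem_ofPred_eq, indef_neg, Complex.neg_re, neg_nonneg]
      using (hF n).le_iff_lt
  rw [Mpos, Mneg, hN]

lemma isMaxNeg_Mneg {F : ℕ → H} (hJ : IsFundSym J)
    (horth : Pairwise fun n m => indef J (F n) (F m) = 0)
    (hexp : ∀ f : H, ∃ c : ℕ → ℂ,
      Tendsto (fun N : ℕ => ∑ n ∈ Finset.range N, c n • F n) atTop (𝓝 f))
    (hF : ∀ n, (indef J (F n) (F n)).re ≠ 0) : IsMaxNeg J (Mneg J F) := by
  rw [← Mpos_neg hF, ← isMaxPos_neg_iff]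
  exact isMaxPos_Mpos (pairwise_indef_neg horth) hexp hJ.neg
    fun n => by simpa [indef_neg] using hF n

lemma frameBoundsOn_Nneg {F : ℕ → H} (hJ : IsFundSym J)
    (horth : Pairwise fun n m => indef J (F n) (F m) = 0)
    (hb : ∀ n, A ≤ ‖indef J (F n) (F n)‖ ∧ ‖indef J (F n) (F n)‖ ≤ B) :
    FrameBoundsOn J F (Nneg J F) A B := by
  rw [← frameBoundsOn_neg_iff]
  refine frameBoundsOn_of_nonneg hJ.neg (pairwise_indef_neg horth) (fun n hn => ?_) fun n _ => ?_
  · simpa [indef_neg] using (show (indef J (F n) (F n)).re < 0 from hn).le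
  · simpa [indef_neg] using hb n

end Reflection

/-- Corollary: a `J`-orthogonal Schauder basis of `(H, (·,·))`
is a `J`-frame iff it is `J`-bounded: `0 < A ≤ |[fₙ,fₙ]| ≤ B < ∞`. -/
theorem stmt15 (J : H →L[ℂ] H) (hJ : IsFundSym J)
    (F : ℕ → H)
    (horth : ∀ n m : ℕ, n ≠ m → indef J (F n) (F m) = 0)
    (hbasis : ∀ f : H, ∃! c : ℕ → ℂ,
      Tendsto (fun N : ℕ => ∑ n ∈ Finset.range N, c n • F n) atTop (nhds f)) :
    (∃ A B : ℝ, IsJFrame J F A B) ↔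
    (∃ A B : ℝ, 0 < A ∧ A ≤ B ∧
      ∀ n : ℕ, A ≤ ‖indef J (F n) (F n)‖ ∧ ‖indef J (F n) (F n)‖ ≤ B) := by
  constructor
  · rintro ⟨A, B, hA, hAB, hMpos, -, hNpos, hNneg⟩
    refine ⟨A, B, hA, hAB, fun n => ?_⟩
    rcases le_or_gt 0 (indef J (F n) (F n)).re with hn | hn
    · have hx := hMpos.1.2 (F n) (Submodule.le_topologicalClosure _
        (Submodule.subset_span ⟨n, hn, rfl⟩)) (ne_zero_of_existsUnique_expansion hbasis n)
      exact FrameBoundsOn.bounds_norm_indef_self hJ horth hNpos hn fun h => by simp [h] at hx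
    · exact FrameBoundsOn.bounds_norm_indef_self hJ horth hNneg hn fun h => by simp [h] at hn
  · rintro ⟨A, B, hA, hAB, hb⟩
    have hexp := fun f => (hbasis f).exists
    have hF : ∀ n, (indef J (F n) (F n)).re ≠ 0 := fun n h => by
      have := (hb n).1
      rw [hJ.norm_indef_self, h, abs_zero] at this
      linarith
    exact ⟨A, B, hA, hAB, isMaxPos_Mpos horth hexp hJ hF, isMaxNeg_Mneg hJ horth hexp hF,
      frameBoundsOn_of_nonneg hJ horth (fun n hn => hn) fun n _ => hb n,
      frameBoundsOn_Nneg hJ horth hb⟩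

end KreinStmt
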